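/- For the Γ-ring HZ (reduced linearization over the integers), the element r = (1,-1) ∈ HZ[2] is a formal difference law: it satisfies p_2^2(r) = 1, s_{1,2,1}^2(r) = 0, p_1^2(r)·r = r·p_1^2(r) = σ(r), every power r^k ∈ HZ[2^k] is fixed under the special action of Σ_{2^{k-1}} × Σ_{2^{k-1}}, and the cancellation condition (4) holds. -/

import Mathlib

/-- The `i`-th restriction map `p_i^n : [n] → [n-1]` on `ℕ`-coordinates. -/
def pres (i : ℕ) : ℕ → ℕ :=
  fun j => if j < i then j else if j = i then 0 else j - 1

/-- The summing map `s_{i,j,k}^n : [n] → [n-1]`: it sends both `i` and `j` to `k`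
and maps the remaining nonzero elements bijectively onto `[n-1] \ {k}`
preserving order. -/
def ssum (i j k : ℕ) : ℕ → ℕ :=
  fun x =>
    if x = i ∨ x = j then k
    else if x = 0 then 0
    else
      let y := x - ((if i < x then 1 else 0) + (if j < x then 1 else 0))
      if y < k then y else y + 1

/-- The map `d_j^n : [n-1] → [n]`: the order-preserving injection missing `j`. -/
def dskip (j : ℕ) : ℕ → ℕ :=
  fun x => if x = 0 then 0 else if x < j then x else x + 1

/-- The transposition `σ` of `[2]` swapping `1` and `2`. -/
def swap12 : ℕ → ℕ := fun x => if x = 1 then 2 else if x = 2 then 1 else 0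

/-- `i ∈ {1,...,2^k}` belongs to `A₊` iff the binary expansion of `i - 1`
has an even number of digits equal to `1`. -/
def inAplus (i : ℕ) : Prop := Even ((Nat.digits 2 (i - 1)).count 1)

/-- `HZ[n] = ℤ^n`, modeled as functions `ℕ → ℤ` (values on `{1,...,n}`).
Functoriality: for a pointed map `f : [n] → [k]`,
`(HZ(f)(a))_j = Σ_{i : f i = j} a_i` for `j ≠ 0`. -/
def HZmap (n : ℕ) (f : ℕ → ℕ) (a : ℕ → ℤ) : ℕ → ℤ :=
  fun j => if j = 0 then 0 else ∑ i ∈ (Finset.Icc 1 n).filter (fun i => f i = j), a i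

/-- The multiplication `HZ[n] ∧ HZ[m] → HZ[nm]`, `(a,b) ↦ (a_i b_j)` at
coordinate `i ∧ j = (j-1)·n + i` under the inverse lexicographic identification. -/
def HZmul (n : ℕ) (a b : ℕ → ℤ) : ℕ → ℤ :=
  fun c => if c = 0 then 0 else a ((c - 1) % n + 1) * b ((c - 1) / n + 1)

/-- The element `r = (1,-1) ∈ HZ[2]`. -/
def rHZ : ℕ → ℤ := fun i => if i = 1 then 1 else if i = 2 then -1 else 0

/-- The unit `1 ∈ HZ[1]`. -/
def oneHZ : ℕ → ℤ := fun i => if i = 1 then 1 else 0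

/-- The `k`-fold smash power `r^k ∈ HZ[2^k]` (with `r^0` the unit). -/
def rHZpow : ℕ → (ℕ → ℤ)
  | 0 => oneHZ
  | k + 1 => HZmul (2 ^ k) (rHZpow k) rHZ

-- aux starts here

instance : DecidablePred inAplus := fun i =>
  inferInstanceAs (Decidable (Even ((Nat.digits 2 (i - 1)).count 1)))

lemma count_digits_step (r : ℕ) :
    (Nat.digits 2 r).count 1 = (if r % 2 = 1 then 1 else 0) + (Nat.digits 2 (r / 2)).count 1 := by
  rcases Nat.eq_zero_or_pos r with h | h
  · simp [h]
  · rw [Nat.digits_def' (by norm_num) h, List.count_cons]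
    have : r % 2 = 1 ∨ r % 2 = 0 := by omega
    rcases this with h2 | h2 <;> simp [h2] <;> omega

lemma count_pow_add : ∀ k r : ℕ, r < 2 ^ k →
    (Nat.digits 2 (2 ^ k + r)).count 1 = (Nat.digits 2 r).count 1 + 1 := by
  intro k
  induction k with
  | zero =>
    intro r hr
    interval_cases r
    simp
  | succ k ih =>
    intro r hr
    have hpos : 0 < 2 ^ (k + 1) + r := by positivity
    rw [Nat.digits_def' (by norm_num) hpos, List.count_cons]
    have h1 : (2 ^ (k + 1) + r) / 2 = 2 ^ k + r / 2 := by
      have : 2 ^ (k+1) = 2 * 2 ^ k := by ring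
      omega
    have h2 : (2 ^ (k + 1) + r) % 2 = r % 2 := by
      have : 2 ^ (k+1) = 2 * 2 ^ k := by ring
      omega
    rw [h1, h2, ih (r / 2) (by omega), count_digits_step r]
    have : r % 2 = 1 ∨ r % 2 = 0 := by omega
    rcases this with h3 | h3 <;> simp [h3] <;> omega

lemma rHZpow_apply : ∀ k c : ℕ,
    rHZpow k c = if 1 ≤ c ∧ c ≤ 2 ^ k then (if inAplus c then 1 else -1) else 0 := by
  intro k
  induction k with
  | zero =>
    intro c
    by_cases hc : c = 1
    · subst hc
      simp [rHZpow, oneHZ, inAplus]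
    · have : ¬ (1 ≤ c ∧ c ≤ 2 ^ 0) := by simp; omega
      simp only [rHZpow, oneHZ, if_neg hc, if_neg this]
  | succ k ih =>
    intro c
    show HZmul (2 ^ k) (rHZpow k) rHZ c = _
    rcases Nat.eq_zero_or_pos c with hc | hc
    · simp [HZmul, hc]
    have hc0 : c ≠ 0 := by omega
    simp only [HZmul, hc0, if_false]
    rw [ih]
    have hrem : (c - 1) % 2 ^ k < 2 ^ k := Nat.mod_lt _ (by positivity)
    have hcond : 1 ≤ (c - 1) % 2 ^ k + 1 ∧ (c - 1) % 2 ^ k + 1 ≤ 2 ^ k := ⟨by omega, by omega⟩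
    rw [if_pos hcond]
    set q := (c - 1) / 2 ^ k with hq
    set r := (c - 1) % 2 ^ k with hr
    have hdiv : 2 ^ k * q + r = c - 1 := Nat.div_add_mod _ _
    have hpow : 2 ^ (k + 1) = 2 ^ k + 2 ^ k := by ring
    rcases Nat.lt_or_ge q 2 with hq2 | hq2
    · interval_cases q
      · -- q = 0 : c = r + 1
        have hcr : c = r + 1 := by omega
        have : rHZ (0 + 1) = 1 := by norm_num [rHZ]
        rw [this, mul_one]
        have hcc : 1 ≤ c ∧ c ≤ 2 ^ (k + 1) := ⟨hc, by omega⟩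
        rw [if_pos hcc, hcr]
      · -- q = 1 : c - 1 = 2^k + r
        have : rHZ (1 + 1) = -1 := by norm_num [rHZ]
        rw [this]
        have hcc : 1 ≤ c ∧ c ≤ 2 ^ (k + 1) := ⟨hc, by omega⟩
        rw [if_pos hcc]
        have hc1 : c - 1 = 2 ^ k + r := by omega
        have hcount : (Nat.digits 2 (c - 1)).count 1 = (Nat.digits 2 r).count 1 + 1 := by
          rw [hc1]; exact count_pow_add k r hrem
        have hiff : inAplus c ↔ ¬ inAplus (r + 1) := by
          unfold inAplus
          rw [hcount]
          simp [Nat.even_add_one]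
        by_cases hA : inAplus (r + 1)
        · rw [if_pos hA, if_neg (by rw [hiff]; exact fun h => h hA)]
          ring
        · rw [if_neg hA, if_pos (hiff.mpr hA)]
          ring
    · -- q ≥ 2 : rHZ (q+1) = 0 and c > 2^(k+1)
      have h1 : rHZ (q + 1) = 0 := by
        unfold rHZ
        rw [if_neg (by omega), if_neg (by omega)]
      rw [h1, mul_zero]
      have : ¬ (1 ≤ c ∧ c ≤ 2 ^ (k + 1)) := by
        rintro ⟨-, h⟩
        have : 2 ^ k * 2 ≤ 2 ^ k * q := Nat.mul_le_mul_left _ hq2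
        omega
      rw [if_neg this]

lemma HZmap_comp (n1 n2 : ℕ) (f g : ℕ → ℕ) (a : ℕ → ℤ)
    (hf0 : f 0 = 0) (hg : ∀ x, 1 ≤ x → x ≤ n1 → g x ≤ n2) :
    HZmap n2 f (HZmap n1 g a) = HZmap n1 (fun x => f (g x)) a := by
  funext j
  unfold HZmap
  by_cases hj : j = 0
  · simp [hj]
  simp only [hj, if_false]
  rw [← Finset.sum_fiberwise_of_maps_to (t := (Finset.Icc 1 n2).filter (fun x => f x = j))
      (g := g) ?_ a]
  · apply Finset.sum_congr rfl
    intro x hx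
    simp only [Finset.mem_filter, Finset.mem_Icc] at hx
    have hset : Finset.filter (fun i => g i = x)
          (Finset.filter (fun i => f (g i) = j) (Finset.Icc 1 n1))
        = Finset.filter (fun i => g i = x) (Finset.Icc 1 n1) := by
      ext y
      simp only [Finset.mem_filter, Finset.mem_Icc]
      constructor
      · rintro ⟨⟨h1, -⟩, h2⟩; exact ⟨h1, h2⟩
      · rintro ⟨h1, h2⟩; exact ⟨⟨h1, by rw [h2, hx.2]⟩, h2⟩
    rw [hset, if_neg (show ¬ x = 0 by omega)]
  · intro y hy
    simp only [Finset.mem_filter, Finset.mem_Icc] at hy ⊢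
    refine ⟨⟨?_, hg y hy.1.1 hy.1.2⟩, hy.2⟩
    by_contra h
    have : g y = 0 := by omega
    rw [this, hf0] at hy
    exact hj hy.2.symm

lemma sum_Icc2 (P : ℕ → Prop) [DecidablePred P] (a : ℕ → ℤ) :
    ∑ i ∈ (Finset.Icc 1 2).filter P, a i =
      (if P 1 then a 1 else 0) + (if P 2 then a 2 else 0) := by
  have h : Finset.Icc 1 2 = {1, 2} := by decide
  rw [Finset.sum_filter, h, Finset.sum_pair (by norm_num)]

lemma ssum_eq (i j k x : ℕ) : ssum i j k x =
    if x = i ∨ x = j then k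
    else if x = 0 then 0
    else if x - ((if i < x then 1 else 0) + (if j < x then 1 else 0)) < k then
      x - ((if i < x then 1 else 0) + (if j < x then 1 else 0))
    else x - ((if i < x then 1 else 0) + (if j < x then 1 else 0)) + 1 := rfl

lemma maps_agree (i j l x : ℕ) (hi : 1 ≤ i) (hij : i < j) (hx0 : x ≠ 0)
    (hxi : x ≠ i) (hxj : x ≠ j) :
    ssum i j l x = dskip l (pres i (pres j x)) := by
  rw [ssum_eq, if_neg (by omega : ¬(x = i ∨ x = j)), if_neg hx0]
  rcases Nat.lt_trichotomy x i with h | h | h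
  · have e1 : pres j x = x := if_pos (by omega)
    have e2 : pres i x = x := if_pos h
    rw [e1, e2]
    unfold dskip
    rw [if_neg hx0, if_neg (by omega : ¬ i < x), if_neg (by omega : ¬ j < x)]
    simp
  · omega
  · rcases Nat.lt_trichotomy x j with h2 | h2 | h2
    · have e1 : pres j x = x := if_pos h2
      have e2 : pres i x = x - 1 := by
        unfold pres; rw [if_neg (by omega), if_neg (by omega)]
      rw [e1, e2]
      unfold dskip
      rw [if_neg (by omega : ¬ x - 1 = 0), if_pos h, if_neg (by omega : ¬ j < x)]
    · omega
    · have e1 : pres j x = x - 1 := by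
        unfold pres; rw [if_neg (by omega), if_neg (by omega)]
      have e2 : pres i (x - 1) = x - 1 - 1 := by
        unfold pres; rw [if_neg (by omega), if_neg (by omega)]
      rw [e1, e2]
      unfold dskip
      rw [if_neg (by omega : ¬ x - 1 - 1 = 0), if_pos h, if_pos h2]
      have : x - (1 + 1) = x - 1 - 1 := by omega
      rw [this]

lemma rHZpow_add_eq_zero {k i j : ℕ} (hi1 : 1 ≤ i) (hi2 : i ≤ 2 ^ k) (hj1 : 1 ≤ j)
    (hj2 : j ≤ 2 ^ k) (hop : ¬(inAplus i ↔ inAplus j)) :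
    rHZpow k i + rHZpow k j = 0 := by
  have e1 : rHZpow k i = if inAplus i then 1 else -1 := by
    rw [rHZpow_apply]; exact if_pos ⟨hi1, hi2⟩
  have e2 : rHZpow k j = if inAplus j then 1 else -1 := by
    rw [rHZpow_apply]; exact if_pos ⟨hj1, hj2⟩
  rw [e1, e2]
  by_cases hA : inAplus i
  · rw [if_pos hA, if_neg (fun h => hop ⟨fun _ => h, fun _ => hA⟩)]; ring
  · have hB : inAplus j := by
      by_contra hB
      exact hop ⟨fun h => absurd h hA, fun h => absurd h hB⟩
    rw [if_neg hA, if_pos hB]; ring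

lemma special_fixed (k : ℕ) (g : ℕ → ℕ) (hg0 : g 0 = 0)
    (hbij : Set.BijOn g (Set.Icc 1 (2 ^ k)) (Set.Icc 1 (2 ^ k)))
    (hpar : ∀ i : ℕ, 1 ≤ i → i ≤ 2 ^ k → (inAplus i ↔ inAplus (g i))) :
    HZmap (2 ^ k) g (rHZpow k) = rHZpow k := by
  funext j
  unfold HZmap
  by_cases hj : j = 0
  · subst hj; simp [rHZpow_apply]
  simp only [hj, if_false]
  by_cases hjr : 1 ≤ j ∧ j ≤ 2 ^ k
  · obtain ⟨x0, hx0mem, hx0⟩ := hbij.surjOn (Set.mem_Icc.mpr hjr)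
    have hx0' : 1 ≤ x0 ∧ x0 ≤ 2 ^ k := Set.mem_Icc.mp hx0mem
    have hfilter : (Finset.Icc 1 (2 ^ k)).filter (fun i => g i = j) = {x0} := by
      ext y
      simp only [Finset.mem_filter, Finset.mem_Icc, Finset.mem_singleton]
      constructor
      · rintro ⟨hy, hgy⟩
        exact hbij.injOn (Set.mem_Icc.mpr hy) hx0mem (by rw [hgy, hx0])
      · rintro rfl
        exact ⟨hx0', hx0⟩
    rw [hfilter, Finset.sum_singleton, rHZpow_apply, rHZpow_apply, if_pos hx0', if_pos hjr]
    have hpp := hpar x0 hx0'.1 hx0'.2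
    rw [hx0] at hpp
    by_cases hA : inAplus x0
    · rw [if_pos hA, if_pos (hpp.mp hA)]
    · rw [if_neg hA, if_neg (fun h => hA (hpp.mpr h))]
  · have hempty : (Finset.Icc 1 (2 ^ k)).filter (fun i => g i = j) = ∅ := by
      rw [Finset.filter_eq_empty_iff]
      intro y hy
      simp only [Finset.mem_Icc] at hy
      intro hgy
      have h2 := hbij.mapsTo (Set.mem_Icc.mpr hy)
      rw [hgy] at h2
      exact hjr (Set.mem_Icc.mp h2)
    rw [hempty, Finset.sum_empty, rHZpow_apply, if_neg hjr]

lemma part4 (k i j l : ℕ) (hi : 1 ≤ i) (hij : i < j) (hj : j ≤ 2 ^ k)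
    (hl : 1 ≤ l) (hl2 : l ≤ 2 ^ k - 1) (hop : ¬(inAplus i ↔ inAplus j)) :
    HZmap (2 ^ k) (ssum i j l) (rHZpow k) =
      HZmap (2 ^ k - 2) (dskip l)
        (HZmap (2 ^ k - 1) (pres i) (HZmap (2 ^ k) (pres j) (rHZpow k))) := by
  have hik : i ≤ 2 ^ k - 1 := by omega
  have hpk : 2 ≤ 2 ^ k := le_trans (by omega) hj
  have hb1 : ∀ x, 1 ≤ x → x ≤ 2 ^ k → pres j x ≤ 2 ^ k - 1 := by
    intro x hx1 hx2
    unfold pres; split_ifs <;> omega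
  have hb2 : ∀ x, 1 ≤ x → x ≤ 2 ^ k → pres i (pres j x) ≤ 2 ^ k - 2 := by
    intro x hx1 hx2
    have := hb1 x hx1 hx2
    unfold pres
    split_ifs <;> omega
  have hp0 : pres i 0 = 0 := by unfold pres; split_ifs <;> omega
  have hd0 : dskip l 0 = 0 := by unfold dskip; simp
  rw [HZmap_comp (2 ^ k) (2 ^ k - 1) (pres i) (pres j) _ hp0 hb1,
    HZmap_comp (2 ^ k) (2 ^ k - 2) (dskip l) _ _ hd0 hb2]
  funext m
  unfold HZmap
  by_cases hm : m = 0
  · simp [hm]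
  simp only [hm, if_false]
  rw [Finset.sum_filter, Finset.sum_filter]
  have hiS : i ∈ Finset.Icc 1 (2 ^ k) := Finset.mem_Icc.mpr ⟨hi, by omega⟩
  have hjS : j ∈ (Finset.Icc 1 (2 ^ k)).erase i :=
    Finset.mem_erase.mpr ⟨by omega, Finset.mem_Icc.mpr ⟨by omega, hj⟩⟩
  have hsplit : ∀ F : ℕ → ℤ, ∑ x ∈ Finset.Icc 1 (2 ^ k), F x =
      F i + F j + ∑ x ∈ ((Finset.Icc 1 (2 ^ k)).erase i).erase j, F x := by
    intro F
    rw [← Finset.add_sum_erase _ F hiS, ← Finset.add_sum_erase _ F hjS, add_assoc]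
  rw [hsplit, hsplit]
  have tail : ∑ x ∈ ((Finset.Icc 1 (2 ^ k)).erase i).erase j,
        (if ssum i j l x = m then rHZpow k x else 0) =
      ∑ x ∈ ((Finset.Icc 1 (2 ^ k)).erase i).erase j,
        (if dskip l (pres i (pres j x)) = m then rHZpow k x else 0) := by
    apply Finset.sum_congr rfl
    intro x hx
    simp only [Finset.mem_erase, Finset.mem_Icc] at hx
    rw [maps_agree i j l x hi hij (by omega) hx.2.1 hx.1]
  rw [tail]
  have h1 : ssum i j l i = l := by rw [ssum_eq]; simp
  have h2 : ssum i j l j = l := by rw [ssum_eq]; simp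
  have h3 : dskip l (pres i (pres j i)) = 0 := by
    unfold dskip pres; split_ifs <;> omega
  have h4 : dskip l (pres i (pres j j)) = 0 := by
    unfold dskip pres; split_ifs <;> omega
  simp only [h1, h2, h3, h4]
  have hm0 : ¬ ((0 : ℕ) = m) := fun h => hm h.symm
  rw [if_neg hm0, if_neg hm0]
  have hzero := rHZpow_add_eq_zero (k := k) hi (by omega) (show 1 ≤ j by omega) hj hop
  by_cases hlm : l = m
  · rw [if_pos hlm, if_pos hlm]
    linarith [hzero]
  · rw [if_neg hlm, if_neg hlm]

lemma part1 : HZmap 2 (pres 2) rHZ = oneHZ := by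
  funext c
  unfold HZmap
  by_cases hc : c = 0
  · simp [hc, oneHZ]
  rw [if_neg hc, sum_Icc2]
  have e1 : pres 2 1 = 1 := rfl
  have e2 : pres 2 2 = 0 := rfl
  rw [e1, e2]
  unfold rHZ oneHZ
  by_cases h1 : c = 1
  · subst h1; norm_num
  · rw [if_neg (fun h : (1 : ℕ) = c => h1 h.symm),
      if_neg (fun h : (0 : ℕ) = c => hc h.symm), if_neg h1]
    norm_num

lemma part2 : HZmap 2 (ssum 1 2 1) rHZ = (fun _ => (0 : ℤ)) := by
  funext c
  unfold HZmap
  by_cases hc : c = 0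
  · simp [hc]
  rw [if_neg hc, sum_Icc2]
  have e1 : ssum 1 2 1 1 = 1 := rfl
  have e2 : ssum 1 2 1 2 = 1 := rfl
  rw [e1, e2]
  unfold rHZ
  by_cases h1 : c = 1
  · subst h1; norm_num
  · rw [if_neg (fun h : (1 : ℕ) = c => h1 h.symm),
      if_neg (fun h : (1 : ℕ) = c => h1 h.symm)]
    norm_num

lemma bval : HZmap 2 (pres 1) rHZ = fun c => if c = 1 then -1 else 0 := by
  funext c
  unfold HZmap
  by_cases hc : c = 0
  · simp [hc]
  rw [if_neg hc, sum_Icc2]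
  have e1 : pres 1 1 = 0 := rfl
  have e2 : pres 1 2 = 1 := rfl
  rw [e1, e2]
  unfold rHZ
  by_cases h1 : c = 1
  · subst h1; norm_num
  · rw [if_neg (fun h : (0 : ℕ) = c => hc h.symm),
      if_neg (fun h : (1 : ℕ) = c => h1 h.symm), if_neg h1]
    norm_num

lemma sw : HZmap 2 swap12 rHZ = fun c => if c = 1 then -1 else if c = 2 then 1 else 0 := by
  funext c
  unfold HZmap
  by_cases hc : c = 0
  · simp [hc]
  rw [if_neg hc, sum_Icc2]
  have e1 : swap12 1 = 2 := rfl
  have e2 : swap12 2 = 1 := rfl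
  rw [e1, e2]
  unfold rHZ
  by_cases h1 : c = 1
  · subst h1; norm_num
  by_cases h2 : c = 2
  · subst h2; norm_num
  rw [if_neg (fun h : (2 : ℕ) = c => h2 h.symm),
    if_neg (fun h : (1 : ℕ) = c => h1 h.symm), if_neg h1, if_neg h2]
  norm_num

lemma part3a : HZmul 1 (HZmap 2 (pres 1) rHZ) rHZ = HZmap 2 swap12 rHZ := by
  rw [bval, sw]
  funext c
  unfold HZmul
  by_cases hc : c = 0
  · simp [hc]
  rw [if_neg hc]
  simp only [Nat.mod_one, Nat.div_one]
  have hcc : c - 1 + 1 = c := by omega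
  rw [hcc]
  unfold rHZ
  by_cases h1 : c = 1
  · subst h1; norm_num
  by_cases h2 : c = 2
  · subst h2; norm_num
  simp only [if_neg h1, if_neg h2]
  norm_num

lemma part3b : HZmul 2 rHZ (HZmap 2 (pres 1) rHZ) = HZmap 2 swap12 rHZ := by
  rw [bval, sw]
  funext c
  unfold HZmul
  by_cases hc : c = 0
  · simp [hc]
  rw [if_neg hc]
  unfold rHZ
  by_cases h1 : c = 1
  · subst h1; norm_num
  by_cases h2 : c = 2
  · subst h2; norm_num
  have hd : ¬ ((c - 1) / 2 + 1 = 1) := by omega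
  simp only [if_neg hd, mul_zero, if_neg h1, if_neg h2]


/-- The element `r = (1,-1) ∈ HZ[2]` is a formal difference law in the Γ-ring
`HZ`:
(1) `p_2^2(r) = 1` and `s_{1,2,1}^2(r) = 0`;
(2) `p_1^2(r)·r = r·p_1^2(r) = σ(r)`;
(3) every power `r^k ∈ HZ[2^k]` is fixed under the special action of
    `Σ_{2^{k-1}} × Σ_{2^{k-1}}` (bijections of `{1,...,2^k}` preserving the
    parity classes `A₊` and `A₋`);
(4) for `i < j` of opposite parity type and any `l`,
    `s_{i,j,l}^{2^k}(r^k) = d_l^{2^k-1} p_i^{2^k-1} p_j^{2^k}(r^k)`. -/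
theorem rHZ_formal_difference_law :
    HZmap 2 (pres 2) rHZ = oneHZ ∧
    HZmap 2 (ssum 1 2 1) rHZ = (fun _ => (0 : ℤ)) ∧
    HZmul 1 (HZmap 2 (pres 1) rHZ) rHZ = HZmap 2 swap12 rHZ ∧
    HZmul 2 rHZ (HZmap 2 (pres 1) rHZ) = HZmap 2 swap12 rHZ ∧
    (∀ (k : ℕ) (g : ℕ → ℕ), g 0 = 0 →
      Set.BijOn g (Set.Icc 1 (2 ^ k)) (Set.Icc 1 (2 ^ k)) →
      (∀ i : ℕ, 1 ≤ i → i ≤ 2 ^ k → (inAplus i ↔ inAplus (g i))) →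
      HZmap (2 ^ k) g (rHZpow k) = rHZpow k) ∧
    (∀ k i j l : ℕ, 1 ≤ i → i < j → j ≤ 2 ^ k → 1 ≤ l → l ≤ 2 ^ k - 1 →
      ¬(inAplus i ↔ inAplus j) →
      HZmap (2 ^ k) (ssum i j l) (rHZpow k) =
        HZmap (2 ^ k - 2) (dskip l)
          (HZmap (2 ^ k - 1) (pres i) (HZmap (2 ^ k) (pres j) (rHZpow k)))) := by
  exact ⟨part1, part2, part3a, part3b, special_fixed, part4⟩
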